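/- Let n ≥ 3, ε > 0, and α = (-(n-1) + √((n-1)² + 4(n-2)))/2. Then the function U(r) = r^α is a supersolution of the perturbed ODE: for all r ∈ (0,1), U''(r) + ((n-2)/r + 2r/(ε+r²)) U'(r) - ((n-2)/r²) U(r) ≤ 0. -/

import Mathlib

/-!
Since `α² + (n-1)α = n-2`, the power `r^α` solves the limiting equation
`U'' + (n/r) U' - ((n-2)/r²) U = 0` obtained at `ε = 0`. For `ε > 0` the drift coefficient
`(n-2)/r + 2r/(ε+r²)` is smaller than `n/r`, and `U' = α r^(α-1) ≥ 0`, so the operator applied to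
`r^α` equals the nonpositive deficit `-2αε r^(α-2)/(ε+r²)`.
-/

open Real

noncomputable def firstModeOperator (n ε : ℝ) (U : ℝ → ℝ) (r : ℝ) : ℝ :=
  deriv (deriv U) r + ((n - 2) / r + 2 * r / (ε + r ^ 2)) * deriv U r - ((n - 2) / r ^ 2) * U r

lemma deriv_deriv_rpow_const (p x : ℝ) :
    deriv (deriv fun x : ℝ => x ^ p) x = p * (p - 1) * x ^ (p - 2) := by
  rw [deriv_rpow_const', deriv_const_mul_field, Real.deriv_rpow_const]
  ring_nf

section QuadraticRoot

variable {b c α : ℝ}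

lemma sq_add_mul_eq_of_eq_neg_add_sqrt (hd : 0 ≤ b ^ 2 + 4 * c)
    (hα : α = (-b + √(b ^ 2 + 4 * c)) / 2) : α ^ 2 + b * α = c := by
  rw [hα]
  linear_combination Real.sq_sqrt hd / 4

lemma nonneg_of_eq_neg_add_sqrt (hc : 0 ≤ c) (hα : α = (-b + √(b ^ 2 + 4 * c)) / 2) :
    0 ≤ α := by
  have hb : b ≤ √(b ^ 2 + 4 * c) :=
    (le_abs_self b).trans (Real.abs_le_sqrt (by linarith))
  rw [hα]
  linarith

end QuadraticRoot

lemma firstModeOperator_rpow {n ε α r : ℝ} (hα : α ^ 2 + (n - 1) * α = n - 2) (hr : r ≠ 0)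
    (hεr : ε + r ^ 2 ≠ 0) :
    firstModeOperator n ε (fun x => x ^ α) r = -(2 * α * ε * r ^ (α - 2) / (ε + r ^ 2)) := by
  have h₁ : r ^ (α - 1) = r ^ (α - 2) * r := by
    rw [← rpow_add_one hr]; ring_nf
  have h₂ : r ^ α = r ^ (α - 2) * r ^ 2 := by
    rw [← rpow_add_natCast hr]; push_cast; ring_nf
  rw [firstModeOperator, deriv_deriv_rpow_const, Real.deriv_rpow_const, h₁, h₂]
  field_simp
  linear_combination (ε + r ^ 2) * r ^ (α - 2) * hα

/-- `U(r) = r^α` is a supersolution of the perturbed first-mode ODE on `(0,1)`. -/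
theorem rpow_alpha_supersolution (n : ℕ) (hn : 3 ≤ n) (ε : ℝ) (hε : 0 < ε)
    (α : ℝ)
    (hα : α = (-(n - 1 : ℝ) + Real.sqrt ((n - 1 : ℝ) ^ 2 + 4 * (n - 2 : ℝ))) / 2)
    (U : ℝ → ℝ) (hU : U = fun r : ℝ => r ^ α) :
    ∀ r ∈ Set.Ioo (0 : ℝ) 1,
      deriv (deriv U) r + ((n - 2 : ℝ) / r + 2 * r / (ε + r ^ 2)) * deriv U r
        - ((n - 2 : ℝ) / r ^ 2) * U r ≤ 0 := by
  rintro r ⟨hr, -⟩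
  have hn' : (3 : ℝ) ≤ n := by exact_mod_cast hn
  have hα_root : α ^ 2 + (n - 1 : ℝ) * α = n - 2 :=
    sq_add_mul_eq_of_eq_neg_add_sqrt (by nlinarith) hα
  have hα_nonneg : 0 ≤ α := nonneg_of_eq_neg_add_sqrt (by linarith) hα
  change firstModeOperator n ε U r ≤ 0
  rw [hU, firstModeOperator_rpow hα_root hr.ne' (by positivity), neg_nonpos]
  positivity
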